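/- Let aₙ,…,a₀ and cₙ,…,c₀ be non-negative integers. Suppose non-negative integers u₀,…,uₙ satisfy: u₀ ≥ a₀; Σ_{i=t}^{n} i·uᵢ ≤ Σ_{i=t}^{n} i·aᵢ for all 2 ≤ t ≤ n; Σ_{i=1}^{n} i·uᵢ = Σ_{i=1}^{n} i·aᵢ; Σ_{i=0}^{n} (i+1)·uᵢ = Σ_{i=0}^{n} (i+1)·cᵢ; and Σ_{i=t}^{n} (i+1)·uᵢ ≤ Σ_{i=t}^{n} (i+1)·cᵢ for all 1 ≤ t ≤ n. Define b_t by bₙ = min(aₙ,cₙ), b_t = ⌊min((Σ_{i=t}^{n} i·aᵢ − Σ_{i=t+1}^{n} i·bᵢ)/t, (Σ_{i=t}^{n}(i+1)·cᵢ − Σ_{i=t+1}^{n}(i+1)·bᵢ)/(t+1))⌋ for 2 ≤ t < n, b₁ = Σ_{i=1}^{n} i·aᵢ − Σ_{i=2}^{n} i·bᵢ, and b₀ = Σ_{i=0}^{n}(i+1)·cᵢ − Σ_{i=1}^{n}(i+1)·bᵢ. Then (b₀,…,bₙ) is also a solution of the same system; in particular b₁ ≤ ½(Σ_{i=1}^{n}(i+1)·cᵢ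 − Σ_{i=2}^{n}(i+1)·bᵢ) and b₀ ≥ a₀. -/
import Mathlib


open Matrix Finset

/-- A finite-dimensional representation of the Kronecker quiver over `k`:
two vector spaces `k^{d1}`, `k^{d2}` and two linear maps `k^{d2} → k^{d1}`
given by the matrices `A` and `B`. -/
structure KRep (k : Type) [Field k] where
  d1 : ℕ
  d2 : ℕ
  A : Matrix (Fin d1) (Fin d2) k
  B : Matrix (Fin d1) (Fin d2) k

/-- A morphism of Kronecker representations `M → N`. -/
structure KHom {k : Type} [Field k] (M N : KRep k) where
  f1 : Matrix (Fin N.d1) (Fin M.d1) k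
  f2 : Matrix (Fin N.d2) (Fin M.d2) k
  comm_a : f1 * M.A = N.A * f2
  comm_b : f1 * M.B = N.B * f2

variable {k : Type} [Field k]

/-- A monomorphism: both components injective. -/
def KHom.Mono {M N : KRep k} (f : KHom M N) : Prop :=
  Function.Injective f.f1.mulVecLin ∧ Function.Injective f.f2.mulVecLin

/-- An epimorphism: both components surjective. -/
def KHom.Epi {M N : KRep k} (f : KHom M N) : Prop :=
  Function.Surjective f.f1.mulVecLin ∧ Function.Surjective f.f2.mulVecLin

/-- Isomorphism of Kronecker representations. -/
def KIso (M N : KRep k) : Prop :=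
  ∃ f : KHom M N, Function.Bijective f.f1.mulVecLin ∧ Function.Bijective f.f2.mulVecLin

/-- `SES N Y M` : there is a short exact sequence `0 → N → Y → M → 0`. -/
def SES (N Y M : KRep k) : Prop :=
  ∃ (f : KHom N Y) (g : KHom Y M), f.Mono ∧ g.Epi ∧
    LinearMap.range f.f1.mulVecLin = LinearMap.ker g.f1.mulVecLin ∧
    LinearMap.range f.f2.mulVecLin = LinearMap.ker g.f2.mulVecLin

/-- The zero representation. -/
def KRep.zero : KRep k := ⟨0, 0, 0, 0⟩

/-- Direct sum of two Kronecker representations (block diagonal matrices). -/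
def KRep.dsum (M N : KRep k) : KRep k where
  d1 := M.d1 + N.d1
  d2 := M.d2 + N.d2
  A := Matrix.reindex finSumFinEquiv finSumFinEquiv (Matrix.fromBlocks M.A 0 0 N.A)
  B := Matrix.reindex finSumFinEquiv finSumFinEquiv (Matrix.fromBlocks M.B 0 0 N.B)

/-- Direct sum of a list of Kronecker representations. -/
def KRep.dsumList (l : List (KRep k)) : KRep k := l.foldr KRep.dsum KRep.zero

/-- The preprojective indecomposable `P n`, with maps `k^n → k^{n+1}`
given by the matrices `(I_n ; 0)` and `(0 ; I_n)`. -/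
def KRep.P (k : Type) [Field k] (n : ℕ) : KRep k where
  d1 := n + 1
  d2 := n
  A := Matrix.of fun i j => if (i : ℕ) = (j : ℕ) then 1 else 0
  B := Matrix.of fun i j => if (i : ℕ) = (j : ℕ) + 1 then 1 else 0

/-- The preinjective indecomposable `I n`, with maps `k^{n+1} → k^n`
given by the matrices `(I_n  0)` and `(0  I_n)`. -/
def KRep.Inj (k : Type) [Field k] (n : ℕ) : KRep k where
  d1 := n
  d2 := n + 1
  A := Matrix.of fun i j => if (i : ℕ) = (j : ℕ) then 1 else 0
  B := Matrix.of fun i j => if (i : ℕ) + 1 = (j : ℕ) then 1 else 0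

/-- `M` is indecomposable: nonzero, and any decomposition as a direct sum
of two subrepresentations has a zero summand. -/
def KRep.Indecomposable (M : KRep k) : Prop :=
  0 < M.d1 + M.d2 ∧
    ∀ N₁ N₂ : KRep k, KIso M (N₁.dsum N₂) → N₁.d1 + N₁.d2 = 0 ∨ N₂.d1 + N₂.d2 = 0

/-- The preinjective representation `a 0 · I₀ ⊕ a 1 · I₁ ⊕ ⋯ ⊕ a n · Iₙ`. -/
def KRep.multi (k : Type) [Field k] (a : ℕ → ℕ) (n : ℕ) : KRep k :=
  KRep.dsumList (((List.range (n + 1)).flatMap fun i => List.replicate (a i) (KRep.Inj k i)))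

/-- `M'` is a subfactor of `M`: there is a linking module `L` with
`M' ↪ L ↞ M`. -/
def IsSubfactor (M' M : KRep k) : Prop :=
  ∃ L : KRep k, (∃ f : KHom M' L, f.Mono) ∧ (∃ g : KHom M L, g.Epi)

/-- Auxiliary recursion computing the greedy sequence `b_n, b_{n-1}, …` of the
linking-module multiplicities: `bA a c n k j` is `b_{n-j}`, computed after `k`
steps of the descending recursion (for `j ≤ k`). -/
def bA (a c : ℕ → ℕ) (n : ℕ) : ℕ → ℕ → ℤ
  | 0, _ => min (a n : ℤ) (c n : ℤ)
  | (K + 1), j =>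
      if j ≤ K then bA a c n K j
      else
        min
          (Int.fdiv ((∑ i ∈ Finset.Icc (n - (K + 1)) n, (i : ℤ) * a i) -
              ∑ jj ∈ Finset.range (K + 1), ((n : ℤ) - jj) * bA a c n K jj)
            ((n : ℤ) - (K + 1)))
          (Int.fdiv ((∑ i ∈ Finset.Icc (n - (K + 1)) n, ((i : ℤ) + 1) * c i) -
              ∑ jj ∈ Finset.range (K + 1), ((n : ℤ) - jj + 1) * bA a c n K jj)
            ((n : ℤ) - (K + 1) + 1))

/-- `bfun a c n t = b_t` for `2 ≤ t ≤ n`:  `b_n = min(a_n, c_n)` and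
`b_t = ⌊min((Σ_{i=t}^n i·aᵢ − Σ_{i=t+1}^n i·bᵢ)/t,
(Σ_{i=t}^n (i+1)·cᵢ − Σ_{i=t+1}^n (i+1)·bᵢ)/(t+1))⌋`. -/
def bfun (a c : ℕ → ℕ) (n t : ℕ) : ℤ := bA a c n (n - t) (n - t)

/-- `b₁ = Σ_{i=1}^n i·aᵢ − Σ_{i=2}^n i·bᵢ`. -/
def bone (a c : ℕ → ℕ) (n : ℕ) : ℤ :=
  (∑ i ∈ Finset.Icc 1 n, (i : ℤ) * a i) - ∑ i ∈ Finset.Icc 2 n, (i : ℤ) * bfun a c n i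

/-- `b₀ = Σ_{i=0}^n (i+1)·cᵢ − Σ_{i=1}^n (i+1)·bᵢ`. -/
def bzero (a c : ℕ → ℕ) (n : ℕ) : ℤ :=
  (∑ i ∈ Finset.Icc 0 n, ((i : ℤ) + 1) * c i) -
    (2 * bone a c n + ∑ i ∈ Finset.Icc 2 n, ((i : ℤ) + 1) * bfun a c n i)

/-- The full sequence `b₀, b₁, …, bₙ`. -/
def bfull (a c : ℕ → ℕ) (n t : ℕ) : ℤ :=
  if t = 0 then bzero a c n else if t = 1 then bone a c n else bfun a c n t

/-- The linear system characterizing the multiplicities `u₀, …, uₙ` of a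
linking module: `u₀ ≥ a₀`; `Σ_{i=t}^n i·uᵢ ≤ Σ_{i=t}^n i·aᵢ` for `2 ≤ t ≤ n`;
`Σ_{i=1}^n i·uᵢ = Σ_{i=1}^n i·aᵢ`; `Σ_{i=0}^n (i+1)·uᵢ = Σ_{i=0}^n (i+1)·cᵢ`;
and `Σ_{i=t}^n (i+1)·uᵢ ≤ Σ_{i=t}^n (i+1)·cᵢ` for `1 ≤ t ≤ n`. -/
def IsSol (a c : ℕ → ℕ) (n : ℕ) (u : ℕ → ℤ) : Prop :=
  (∀ t, t ≤ n → 0 ≤ u t) ∧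
  (a 0 : ℤ) ≤ u 0 ∧
  (∀ t, 2 ≤ t → t ≤ n →
    (∑ i ∈ Finset.Icc t n, (i : ℤ) * u i) ≤ ∑ i ∈ Finset.Icc t n, (i : ℤ) * a i) ∧
  (∑ i ∈ Finset.Icc 1 n, (i : ℤ) * u i) = (∑ i ∈ Finset.Icc 1 n, (i : ℤ) * a i) ∧
  (∑ i ∈ Finset.Icc 0 n, ((i : ℤ) + 1) * u i) = (∑ i ∈ Finset.Icc 0 n, ((i : ℤ) + 1) * c i) ∧
  (∀ t, 1 ≤ t → t ≤ n →
    (∑ i ∈ Finset.Icc t n, ((i : ℤ) + 1) * u i) ≤ ∑ i ∈ Finset.Icc t n, ((i : ℤ) + 1) * c i)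

section GreedyHelpers

open Finset

/-- Split an `Icc` sum at `t`. -/
lemma gsum_split (f : ℕ → ℤ) {j t m : ℕ} (h1 : j ≤ t) (h2 : t ≤ m) :
    ∑ i ∈ Icc j m, f i = (∑ i ∈ Ico j t, f i) + ∑ i ∈ Icc t m, f i := by
  rw [← Finset.sum_union (by simp [Finset.disjoint_left]; omega)]
  apply Finset.sum_congr _ (fun x _ => rfl)
  ext x; simp; omega

lemma gsum_pull (f : ℕ → ℤ) {t m : ℕ} (h : t ≤ m) :
    ∑ i ∈ Icc t m, f i = f t + ∑ i ∈ Icc (t+1) m, f i := by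
  rw [← Finset.Ico_add_one_right_eq_Icc, Finset.sum_eq_sum_Ico_succ_bot (by omega), Finset.Ico_add_one_right_eq_Icc]

def Sa (a : ℕ → ℕ) (n t : ℕ) : ℤ := ∑ i ∈ Icc t n, (i : ℤ) * a i

def Tc (c : ℕ → ℕ) (n t : ℕ) : ℤ := ∑ i ∈ Icc t n, ((i : ℤ) + 1) * c i

lemma Sa_mono (a : ℕ → ℕ) {n j t : ℕ} (h1 : j ≤ t) (h2 : t ≤ n) :
    Sa a n t ≤ Sa a n j := by
  unfold Sa
  rw [gsum_split _ h1 h2]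
  have : (0:ℤ) ≤ ∑ i ∈ Ico j t, (i : ℤ) * a i := by positivity
  linarith

lemma Tc_mono (c : ℕ → ℕ) {n j t : ℕ} (h1 : j ≤ t) (h2 : t ≤ n) :
    Tc c n t ≤ Tc c n j := by
  unfold Tc
  rw [gsum_split _ h1 h2]
  have : (0:ℤ) ≤ ∑ i ∈ Ico j t, ((i : ℤ)+1) * c i := by positivity
  linarith

lemma bA_stable (a c : ℕ → ℕ) (n : ℕ) :
    ∀ K' K j, j ≤ K → K ≤ K' → bA a c n K' j = bA a c n K j := by
  intro K'
  induction K' with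
  | zero =>
      intro K j h1 h2
      have hz : K = 0 := by omega
      subst hz; rfl
  | succ K' ih =>
      intro K j h1 h2
      rcases Nat.eq_or_lt_of_le h2 with rfl | h
      · rfl
      · have hK : K ≤ K' := by omega
        have hj : j ≤ K' := le_trans h1 hK
        rw [show bA a c n (K'+1) j = if j ≤ K' then bA a c n K' j else _ from rfl,
          if_pos hj]
        exact ih K j h1 hK

lemma bfun_n (a c : ℕ → ℕ) (n : ℕ) : bfun a c n n = min (a n : ℤ) (c n : ℤ) := by
  simp [bfun, bA]

lemma bfun_eq (a c : ℕ → ℕ) (n : ℕ) {t : ℕ} (h2 : 2 ≤ t) (htn : t ≤ n) :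
    bfun a c n t =
      min (Int.fdiv (Sa a n t - ∑ i ∈ Icc (t+1) n, (i : ℤ) * bfun a c n i) t)
          (Int.fdiv (Tc c n t - ∑ i ∈ Icc (t+1) n, ((i : ℤ) + 1) * bfun a c n i) (t+1)) := by
  rcases Nat.eq_or_lt_of_le htn with rfl | hlt
  · rw [bfun_n]
    rw [show Icc (t+1) t = ∅ from Finset.Icc_eq_empty (by omega)]
    simp only [Finset.sum_empty, sub_zero]
    unfold Sa Tc
    rw [Finset.Icc_self, Finset.sum_singleton, Finset.sum_singleton]
    have ht0 : (t:ℤ) ≠ 0 := by exact_mod_cast by omega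
    have ht1 : (t:ℤ) + 1 ≠ 0 := by positivity
    rw [Int.mul_fdiv_cancel_left _ ht0, Int.mul_fdiv_cancel_left _ ht1]
  · have hK : n - t = (n - t - 1) + 1 := by omega
    set K := n - t - 1 with hKdef
    have h1 : bfun a c n t = bA a c n (K+1) (K+1) := by
      unfold bfun; rw [hK]
    rw [h1]
    rw [show bA a c n (K+1) (K+1) = if (K+1) ≤ K then bA a c n K (K+1) else
        min
          (Int.fdiv ((∑ i ∈ Finset.Icc (n - (K + 1)) n, (i : ℤ) * a i) -
              ∑ jj ∈ Finset.range (K + 1), ((n : ℤ) - jj) * bA a c n K jj)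
            ((n : ℤ) - (K + 1)))
          (Int.fdiv ((∑ i ∈ Finset.Icc (n - (K + 1)) n, ((i : ℤ) + 1) * c i) -
              ∑ jj ∈ Finset.range (K + 1), ((n : ℤ) - jj + 1) * bA a c n K jj)
            ((n : ℤ) - (K + 1) + 1)) from rfl, if_neg (by omega)]
    have hnk : n - (K+1) = t := by omega
    have hcast : ((n : ℤ) - (K+1)) = (t : ℤ) := by
      have : K + 1 ≤ n := by omega
      omega
    have hsum1 : ∑ jj ∈ Finset.range (K + 1), ((n : ℤ) - jj) * bA a c n K jj
        = ∑ i ∈ Icc (t+1) n, (i : ℤ) * bfun a c n i := by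
      apply Finset.sum_nbij' (fun jj => n - jj) (fun i => n - i)
      · intro x hx; simp only [Finset.mem_range] at hx; simp only [Finset.mem_Icc]; omega
      · intro x hx; simp only [Finset.mem_Icc] at hx; simp only [Finset.mem_range]; omega
      · intro x hx; simp only [Finset.mem_range] at hx; omega
      · intro x hx; simp only [Finset.mem_Icc] at hx; omega
      · intro x hx
        simp only [Finset.mem_range] at hx
        have hxn : x ≤ n := by omega
        have hc : ((n - x : ℕ) : ℤ) = (n : ℤ) - x := by push_cast [hxn]; ring
        rw [hc]
        congr 1
        have : bfun a c n (n - x) = bA a c n x x := by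
          unfold bfun; rw [show n - (n - x) = x by omega]
        rw [this, bA_stable a c n K x x (le_refl x) (by omega)]
    have hsum2 : ∑ jj ∈ Finset.range (K + 1), ((n : ℤ) - jj + 1) * bA a c n K jj
        = ∑ i ∈ Icc (t+1) n, ((i : ℤ) + 1) * bfun a c n i := by
      apply Finset.sum_nbij' (fun jj => n - jj) (fun i => n - i)
      · intro x hx; simp only [Finset.mem_range] at hx; simp only [Finset.mem_Icc]; omega
      · intro x hx; simp only [Finset.mem_Icc] at hx; simp only [Finset.mem_range]; omega
      · intro x hx; simp only [Finset.mem_range] at hx; omega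
      · intro x hx; simp only [Finset.mem_Icc] at hx; omega
      · intro x hx
        simp only [Finset.mem_range] at hx
        have hxn : x ≤ n := by omega
        have hc : ((n - x : ℕ) : ℤ) = (n : ℤ) - x := by push_cast [hxn]; ring
        rw [hc]
        congr 1
        have : bfun a c n (n - x) = bA a c n x x := by
          unfold bfun; rw [show n - (n - x) = x by omega]
        rw [this, bA_stable a c n K x x (le_refl x) (by omega)]
    rw [hnk, hcast, hsum1, hsum2]
    rfl

end GreedyHelpers

section GreedyInvariant
open Finset

lemma fdiv_le_self_mul {X d : ℤ} (hd : 0 < d) : d * Int.fdiv X d ≤ X := by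
  rw [Int.fdiv_eq_ediv_of_nonneg _ (le_of_lt hd), mul_comm]
  exact Int.ediv_mul_le X (by omega)

lemma le_fdiv_of_mul_le {y X d : ℤ} (hd : 0 < d) (h : d * y ≤ X) : y ≤ Int.fdiv X d := by
  rw [Int.fdiv_eq_ediv_of_nonneg _ (le_of_lt hd)]
  rw [Int.le_ediv_iff_mul_le hd, mul_comm]
  exact h

lemma bfun_invariant (a c : ℕ → ℕ) (n : ℕ) :
    ∀ t, 2 ≤ t → t ≤ n →
      0 ≤ bfun a c n t ∧
      (∑ i ∈ Icc t n, (i : ℤ) * bfun a c n i) ≤ Sa a n t ∧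
      (∑ i ∈ Icc t n, ((i : ℤ) + 1) * bfun a c n i) ≤ Tc c n t := by
  have H : ∀ m t, 2 ≤ t → t ≤ n → n - t ≤ m →
      0 ≤ bfun a c n t ∧
      (∑ i ∈ Icc t n, (i : ℤ) * bfun a c n i) ≤ Sa a n t ∧
      (∑ i ∈ Icc t n, ((i : ℤ) + 1) * bfun a c n i) ≤ Tc c n t := by
    intro m
    induction m with
    | zero =>
        intro t h2 htn hm
        have hnt : n = t := by omega
        subst hnt
        rw [bfun_n]
        have hIcc : Icc n n = {n} := Finset.Icc_self n
        refine ⟨le_min (by positivity) (by positivity), ?_, ?_⟩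
        · rw [hIcc, Finset.sum_singleton, bfun_n]
          unfold Sa; rw [hIcc, Finset.sum_singleton]
          have : (0:ℤ) ≤ (n:ℤ) := by positivity
          exact mul_le_mul_of_nonneg_left (min_le_left _ _) this
        · rw [hIcc, Finset.sum_singleton, bfun_n]
          unfold Tc; rw [hIcc, Finset.sum_singleton]
          have : (0:ℤ) ≤ (n:ℤ) + 1 := by positivity
          exact mul_le_mul_of_nonneg_left (min_le_right _ _) this
    | succ m ih =>
        intro t h2 htn hm
        rcases Nat.eq_or_lt_of_le htn with rfl | hlt
        · exact ih t h2 le_rfl (by omega)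
        · obtain ⟨hb1, hb2, hb3⟩ := ih (t+1) (by omega) (by omega) (by omega)
          have ht0 : (0:ℤ) < (t:ℤ) := by exact_mod_cast by omega
          have ht1 : (0:ℤ) < (t:ℤ) + 1 := by positivity
          set X := Sa a n t - ∑ i ∈ Icc (t+1) n, (i : ℤ) * bfun a c n i with hX
          set Y := Tc c n t - ∑ i ∈ Icc (t+1) n, ((i : ℤ) + 1) * bfun a c n i with hY
          have heq := bfun_eq a c n h2 htn
          have hX0 : 0 ≤ X := by
            have h1 : Sa a n (t+1) ≤ Sa a n t := Sa_mono a (by omega) (by omega)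
            rw [hX]; linarith
          have hY0 : 0 ≤ Y := by
            have h1 : Tc c n (t+1) ≤ Tc c n t := Tc_mono c (by omega) (by omega)
            rw [hY]; linarith
          have hble1 : (t:ℤ) * bfun a c n t ≤ X := by
            calc (t:ℤ) * bfun a c n t ≤ (t:ℤ) * Int.fdiv X t := by
                  apply mul_le_mul_of_nonneg_left _ (le_of_lt ht0)
                  rw [heq]; exact min_le_left _ _
              _ ≤ X := fdiv_le_self_mul ht0
          have hble2 : ((t:ℤ)+1) * bfun a c n t ≤ Y := by
            calc ((t:ℤ)+1) * bfun a c n t ≤ ((t:ℤ)+1) * Int.fdiv Y ((t:ℤ)+1) := by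
                  apply mul_le_mul_of_nonneg_left _ (le_of_lt ht1)
                  rw [heq]; exact min_le_right _ _
              _ ≤ Y := fdiv_le_self_mul ht1
          have hbpos : 0 ≤ bfun a c n t := by
            rw [heq]
            apply le_min
            · rw [Int.fdiv_eq_ediv_of_nonneg _ (le_of_lt ht0)]
              exact Int.ediv_nonneg hX0 (le_of_lt ht0)
            · rw [Int.fdiv_eq_ediv_of_nonneg _ (le_of_lt ht1)]
              exact Int.ediv_nonneg hY0 (le_of_lt ht1)
          refine ⟨hbpos, ?_, ?_⟩
          · rw [gsum_pull _ htn]; rw [hX] at hble1; linarith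
          · rw [gsum_pull _ htn]; rw [hY] at hble2; linarith
  intro t h2 htn
  exact H (n - t) t h2 htn le_rfl
end GreedyInvariant

section GreedyExchange
open Finset

/-- The modified solution in a single exchange move. -/
def mv (v : ℕ → ℤ) (t s e : ℕ) (k D : ℤ) : ℕ → ℤ := fun i =>
  if i = 0 then v 0 + D
  else if i = t then v t + 1
  else if t < i then v i
  else if s < i then 0
  else if i = s then v s - k
  else if i = e then v i + 1
  else v i

lemma mv_eval0 (v : ℕ → ℤ) (t s e : ℕ) (k D : ℤ) : mv v t s e k D 0 = v 0 + D := by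
  simp [mv]

lemma mv_evalt (v : ℕ → ℤ) {t : ℕ} (s e : ℕ) (k D : ℤ) (ht : t ≠ 0) :
    mv v t s e k D t = v t + 1 := by
  unfold mv; rw [if_neg ht, if_pos rfl]

lemma mv_eval_hi (v : ℕ → ℤ) {t i : ℕ} (s e : ℕ) (k D : ℤ) (h1 : t < i) :
    mv v t s e k D i = v i := by
  unfold mv; rw [if_neg (by omega), if_neg (by omega), if_pos h1]

lemma mv_eval_mid (v : ℕ → ℤ) {t s i : ℕ} (e : ℕ) (k D : ℤ) (h0 : 1 ≤ s)
    (h1 : s < i) (h2 : i < t) : mv v t s e k D i = 0 := by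
  unfold mv; rw [if_neg (by omega), if_neg (by omega), if_neg (by omega), if_pos h1]

lemma mv_evals (v : ℕ → ℤ) {t s : ℕ} (e : ℕ) (k D : ℤ) (h0 : 1 ≤ s) (h1 : s < t) :
    mv v t s e k D s = v s - k := by
  unfold mv
  rw [if_neg (by omega), if_neg (by omega), if_neg (by omega), if_neg (by omega), if_pos rfl]

lemma mv_eval_lo (v : ℕ → ℤ) {t s i : ℕ} (e : ℕ) (k D : ℤ) (h0 : 1 ≤ i)
    (h1 : i < s) (h2 : s < t) :
    mv v t s e k D i = if i = e then v i + 1 else v i := by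
  unfold mv
  rw [if_neg (by omega), if_neg (by omega), if_neg (by omega), if_neg (by omega),
    if_neg (by omega)]

def Wf (v : ℕ → ℤ) (t j : ℕ) : ℤ := ∑ i ∈ Ico j t, (i : ℤ) * v i

def Cf (v : ℕ → ℤ) (t j : ℕ) : ℤ := ∑ i ∈ Ico j t, v i

set_option maxHeartbeats 2000000 in
lemma exchange_step (a c : ℕ → ℕ) (n : ℕ) {t : ℕ} (h2 : 2 ≤ t) (htn : t ≤ n)
    (v : ℕ → ℤ) (hv : IsSol a c n v)
    (hvb : ∀ i, t < i → i ≤ n → v i = bfun a c n i)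
    (hlt : v t + 1 ≤ bfun a c n t) :
    ∃ w : ℕ → ℤ, IsSol a c n w ∧ (∀ i, t < i → i ≤ n → w i = bfun a c n i) ∧
      w t = v t + 1 := by
  obtain ⟨hpos, h00, hS, hS1, hT0, hT⟩ := hv
  -- rephrase with Sa / Tc
  have hS' : ∀ j, 2 ≤ j → j ≤ n → (∑ i ∈ Icc j n, (i:ℤ) * v i) ≤ Sa a n j := hS
  have hT' : ∀ j, 1 ≤ j → j ≤ n → (∑ i ∈ Icc j n, ((i:ℤ)+1) * v i) ≤ Tc c n j := hT
  have ht0 : (0:ℤ) < (t:ℤ) := by exact_mod_cast (by omega : 0 < t)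
  have hcongrS : ∑ i ∈ Icc (t+1) n, (i:ℤ) * v i
      = ∑ i ∈ Icc (t+1) n, (i:ℤ) * bfun a c n i := by
    apply Finset.sum_congr rfl
    intro i hi; simp only [Finset.mem_Icc] at hi
    rw [hvb i (by omega) hi.2]
  have hcongrT : ∑ i ∈ Icc (t+1) n, ((i:ℤ)+1) * v i
      = ∑ i ∈ Icc (t+1) n, ((i:ℤ)+1) * bfun a c n i := by
    apply Finset.sum_congr rfl
    intro i hi; simp only [Finset.mem_Icc] at hi
    rw [hvb i (by omega) hi.2]
  obtain ⟨hbpos, hbS, hbT⟩ := bfun_invariant a c n t h2 htn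
  rw [gsum_pull _ htn] at hbS hbT
  -- hbS : (t:ℤ) * bfun .. t + ∑ (t+1) ≤ Sa a n t, etc.
  have hmul1 : (t:ℤ) * (v t + 1) ≤ (t:ℤ) * bfun a c n t :=
    mul_le_mul_of_nonneg_left hlt (le_of_lt ht0)
  have hmul2 : ((t:ℤ)+1) * (v t + 1) ≤ ((t:ℤ)+1) * bfun a c n t :=
    mul_le_mul_of_nonneg_left hlt (by positivity)
  have hWnn : ∀ j, 0 ≤ Wf v t j := by
    intro j; unfold Wf
    apply Finset.sum_nonneg
    intro i hi; simp only [Finset.mem_Ico] at hi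
    exact mul_nonneg (by positivity) (hpos i (by omega))
  have hCnn : ∀ j, 0 ≤ Cf v t j := by
    intro j; unfold Cf
    apply Finset.sum_nonneg
    intro i hi; simp only [Finset.mem_Ico] at hi
    exact hpos i (by omega)
  have hWC : ∀ j, Wf v t j ≤ (t:ℤ) * Cf v t j := by
    intro j; unfold Wf Cf
    rw [Finset.mul_sum]
    apply Finset.sum_le_sum
    intro i hi; simp only [Finset.mem_Ico] at hi
    exact mul_le_mul_of_nonneg_right (by exact_mod_cast (by omega : i ≤ t)) (hpos i (by omega))
  have hSsplit1 : ∑ i ∈ Icc 1 n, (i:ℤ) * v i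
      = Wf v t 1 + ((t:ℤ) * v t + ∑ i ∈ Icc (t+1) n, (i:ℤ) * v i) := by
    rw [gsum_split (fun i => (i:ℤ) * v i) (by omega : 1 ≤ t) htn,
      gsum_pull (fun i => (i:ℤ) * v i) htn]
    rfl
  have hSa1 : Sa a n t ≤ Sa a n 1 := Sa_mono a (by omega) htn
  have hW1 : (t:ℤ) ≤ Wf v t 1 := by
    have e1 : ∑ i ∈ Icc 1 n, (i:ℤ) * v i = Sa a n 1 := hS1
    rw [hSsplit1, hcongrS] at e1
    linarith [hmul1, hbS]
  -- the threshold s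
  set s := Nat.findGreatest (fun j => (t:ℤ) ≤ Wf v t j) (t-1) with hsdef
  have hs1 : 1 ≤ s := Nat.le_findGreatest (by omega) hW1
  have hst : s ≤ t - 1 := Nat.findGreatest_le (t-1)
  have hst' : s < t := by omega
  have hsn : s + 1 ≤ n := by omega
  have hs0 : (0:ℤ) < (s:ℤ) := by exact_mod_cast (by omega : 0 < s)
  have hWs : (t:ℤ) ≤ Wf v t s := Nat.findGreatest_spec (P := fun j => (t:ℤ) ≤ Wf v t j) (m := 1) (by omega) hW1
  have hWs1 : Wf v t (s+1) < (t:ℤ) := by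
    by_cases hc : s + 1 ≤ t - 1
    · have hgt := Nat.findGreatest_is_greatest (P := fun j => (t:ℤ) ≤ Wf v t j)
        (n := t-1) (k := s+1) (by rw [← hsdef]; omega) hc
      exact not_le.mp hgt
    · have hst1 : s + 1 = t := by omega
      rw [hst1]
      unfold Wf
      rw [Finset.Ico_self, Finset.sum_empty]
      exact ht0
  set x := (t:ℤ) - Wf v t (s+1) with hxdef
  have hx1 : 1 ≤ x := by
    have := Int.add_one_le_iff.mpr hWs1
    rw [hxdef]; linarith
  set k := (x + (s:ℤ) - 1) / (s:ℤ) with hkdef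
  have hdm := Int.mul_ediv_add_emod (x + (s:ℤ) - 1) (s:ℤ)
  have hr0 : 0 ≤ (x + (s:ℤ) - 1) % (s:ℤ) := Int.emod_nonneg _ (ne_of_gt hs0)
  have hr1 : (x + (s:ℤ) - 1) % (s:ℤ) < (s:ℤ) := Int.emod_lt_of_pos _ hs0
  have hks_ge : x ≤ (s:ℤ) * k := by rw [hkdef]; linarith
  have hks_lt : (s:ℤ) * k ≤ x + (s:ℤ) - 1 := by rw [hkdef]; linarith
  have hk1 : 1 ≤ k := by
    by_contra hc; push_neg at hc
    have hk0 : k ≤ 0 := by omega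
    have : (s:ℤ) * k ≤ (s:ℤ) * 0 := mul_le_mul_of_nonneg_left hk0 (le_of_lt hs0)
    rw [mul_zero] at this; linarith
  have hsvs : (s:ℤ) * v s = Wf v t s - Wf v t (s+1) := by
    unfold Wf
    rw [Finset.sum_eq_sum_Ico_succ_bot hst' (fun i => (i:ℤ) * v i)]
    ring
  have hkvs : k ≤ v s := by
    have h1 : x ≤ (s:ℤ) * v s := by rw [hxdef]; linarith
    by_contra hc; push_neg at hc
    have h3 : (s:ℤ) * (v s + 1) ≤ (s:ℤ) * k :=
      mul_le_mul_of_nonneg_left (by omega) (le_of_lt hs0)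
    rw [mul_add, mul_one] at h3; linarith
  set E := (s:ℤ) * k - x with hEdef
  have hE0 : 0 ≤ E := by rw [hEdef]; linarith
  have hEs : E ≤ (s:ℤ) - 1 := by rw [hEdef]; linarith
  set e := E.toNat with hedef
  have hecast : (e:ℤ) = E := Int.toNat_of_nonneg hE0
  have he_lt_s : e < s := by omega
  have hkC : (1:ℤ) ≤ E → 2 ≤ k + Cf v t (s+1) := by
    intro hE1
    by_cases hk2 : 2 ≤ k
    · linarith [hCnn (s+1)]
    · have hk1' : k = 1 := by omega
      rw [hk1'] at hEdef
      rw [mul_one] at hEdef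
      have hsc : (s:ℤ) + 1 ≤ (t:ℤ) := by exact_mod_cast (by omega : s + 1 ≤ t)
      have hW2 : 2 ≤ Wf v t (s+1) := by rw [hxdef] at hEdef; linarith
      have hC1 : 1 ≤ Cf v t (s+1) := by
        by_contra hc; push_neg at hc
        have h0 : Cf v t (s+1) = 0 := le_antisymm (by omega) (hCnn (s+1))
        have h4 := hWC (s+1)
        rw [h0, mul_zero] at h4; linarith
      linarith
  set D := Cf v t (s+1) + k - 1 - (if (1:ℤ) ≤ E then 1 else 0) with hDdef
  have hD0 : 0 ≤ D := by
    rw [hDdef]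
    by_cases hE1 : (1:ℤ) ≤ E
    · rw [if_pos hE1]; linarith [hkC hE1]
    · rw [if_neg hE1]; linarith [hCnn (s+1)]
  set w := mv v t s e k D with hwdef
  -- master sum computations
  have hsum_hi : ∀ (g : ℕ → ℤ), ∀ j, s < j → j ≤ t →
      ∑ i ∈ Icc j n, g i * w i = g t * (v t + 1) + ∑ i ∈ Icc (t+1) n, g i * v i := by
    intro g j hjs hjt
    have hsub : Icc t n ⊆ Icc j n := Finset.Icc_subset_Icc hjt le_rfl
    have hzero : ∀ i ∈ Icc j n, i ∉ Icc t n → g i * w i = 0 := by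
      intro i hi hi2
      simp only [Finset.mem_Icc] at hi hi2
      have hit : i < t := by omega
      rw [hwdef, mv_eval_mid v e k D hs1 (by omega) hit, mul_zero]
    rw [(Finset.sum_subset hsub hzero).symm, gsum_pull (fun i => g i * w i) htn]
    congr 1
    · rw [hwdef, mv_evalt v s e k D (by omega)]
    · apply Finset.sum_congr rfl
      intro i hi; simp only [Finset.mem_Icc] at hi
      rw [hwdef, mv_eval_hi v s e k D (by omega)]
  have hsum_lo : ∀ (g : ℕ → ℤ), ∀ j, 1 ≤ j → j ≤ s →
      ∑ i ∈ Icc j n, g i * w i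
        = (∑ i ∈ Icc j n, g i * v i) + g t - g s * k - (∑ i ∈ Ico (s+1) t, g i * v i)
          + (if (j:ℤ) ≤ E then g e else 0) := by
    intro g j hj1 hjs
    have hL : ∑ i ∈ Icc j n, g i * w i
        = (∑ i ∈ Ico j s, g i * w i) + g s * w s + ∑ i ∈ Icc (s+1) n, g i * w i := by
      rw [gsum_split (fun i => g i * w i) (by omega : j ≤ s+1) hsn,
        Finset.sum_Ico_succ_top hjs]
    have hR : ∑ i ∈ Icc j n, g i * v i
        = (∑ i ∈ Ico j s, g i * v i) + g s * v s + (∑ i ∈ Ico (s+1) t, g i * v i)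
          + g t * v t + ∑ i ∈ Icc (t+1) n, g i * v i := by
      rw [gsum_split (fun i => g i * v i) (by omega : j ≤ t) htn,
        gsum_pull (fun i => g i * v i) htn,
        ← Finset.Ico_union_Ico_eq_Ico (by omega : j ≤ s+1) (by omega : s+1 ≤ t),
        Finset.sum_union (by simp [Finset.disjoint_left]; omega),
        Finset.sum_Ico_succ_top hjs]
      ring
    have hlow : ∑ i ∈ Ico j s, g i * w i
        = (∑ i ∈ Ico j s, g i * v i) + (if (j:ℤ) ≤ E then g e else 0) := by
      have hpt : ∀ i ∈ Ico j s, g i * w i = g i * v i + (if i = e then g e else 0) := by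
        intro i hi; simp only [Finset.mem_Ico] at hi
        rw [hwdef, mv_eval_lo v e k D (by omega) hi.2 hst']
        by_cases he : i = e
        · subst he; rw [if_pos rfl, if_pos rfl]; ring
        · rw [if_neg he, if_neg he]; ring
      rw [Finset.sum_congr rfl hpt, Finset.sum_add_distrib,
        Finset.sum_ite_eq' (Ico j s) e (fun _ => g e)]
      congr 1
      have hiff : e ∈ Ico j s ↔ (j:ℤ) ≤ E := by
        simp only [Finset.mem_Ico]
        omega
      rw [if_congr hiff rfl rfl]
    rw [hL, hlow, hsum_hi g (s+1) (by omega) (by omega),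
      hwdef, mv_evals v e k D hs1 hst', hR]
    ring
  -- helper algebraic identities
  have hkey : (t:ℤ) - (s:ℤ) * k - Wf v t (s+1) = -E := by
    rw [hEdef, hxdef]; ring
  have hsplitT : ∑ i ∈ Ico (s+1) t, ((i:ℤ)+1) * v i = Wf v t (s+1) + Cf v t (s+1) := by
    unfold Wf Cf
    rw [← Finset.sum_add_distrib]
    apply Finset.sum_congr rfl
    intro i _; ring
  have hWfrfl : ∑ i ∈ Ico (s+1) t, (i:ℤ) * v i = Wf v t (s+1) := rfl
  have hsk1 : ((s:ℤ)+1) * k = (s:ℤ) * k + k := by ring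
  refine ⟨w, ⟨?_, ?_, ?_, ?_, ?_, ?_⟩, ?_, ?_⟩
  · -- nonnegativity
    intro i hi
    by_cases hi0 : i = 0
    · subst hi0; rw [hwdef, mv_eval0]; have := hpos 0 (by omega); linarith
    by_cases hit : i = t
    · rw [hit, hwdef, mv_evalt v s e k D (by omega)]
      have := hpos t htn; linarith
    by_cases hti : t < i
    · rw [hwdef, mv_eval_hi v s e k D hti]; exact hpos i hi
    by_cases hsi : s < i
    · rw [hwdef, mv_eval_mid v e k D hs1 hsi (by omega)]
    by_cases his : i = s
    · rw [his, hwdef, mv_evals v e k D hs1 hst']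
      linarith [hkvs]
    · rw [hwdef, mv_eval_lo v e k D (by omega) (by omega) hst']
      have := hpos i hi
      split_ifs <;> linarith
  · -- a 0 ≤ w 0
    rw [hwdef, mv_eval0]; linarith
  · -- S inequalities
    intro j hj2 hjn
    show _ ≤ Sa a n j
    by_cases hjt : t < j
    · have hc : ∀ i ∈ Icc j n, (i:ℤ) * w i = (i:ℤ) * v i := by
        intro i hi; simp only [Finset.mem_Icc] at hi
        rw [hwdef, mv_eval_hi v s e k D (by omega)]
      rw [Finset.sum_congr rfl hc]
      exact hS' j hj2 hjn
    by_cases hjs : s < j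
    · rw [hsum_hi (fun i => (i:ℤ)) j hjs (by omega), hcongrS]
      have h5 : Sa a n t ≤ Sa a n j := Sa_mono a (by omega) htn
      linarith [hmul1, hbS]
    · rw [hsum_lo (fun i => (i:ℤ)) j (by omega) (by omega), hWfrfl]
      have h6 := hS' j hj2 hjn
      by_cases hje : ((j:ℤ)) ≤ E
      · rw [if_pos hje]; linarith [hkey, hecast]
      · rw [if_neg hje]; linarith [hkey, hE0]
  · -- S_1 equality
    rw [hsum_lo (fun i => (i:ℤ)) 1 le_rfl hs1, hWfrfl]
    simp only [Nat.cast_one]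
    by_cases hje : (1:ℤ) ≤ E
    · rw [if_pos hje]; linarith [hkey, hecast, hS1]
    · rw [if_neg hje]
      have hE00 : E = 0 := by omega
      linarith [hkey, hS1, hE00]
  · -- T_0 equality
    rw [gsum_pull (fun i => ((i:ℤ)+1) * w i) (by omega : 0 ≤ n),
      hsum_lo (fun i => (i:ℤ)+1) 1 le_rfl hs1, hsplitT]
    have hT0' := hT0
    rw [gsum_pull (fun i => ((i:ℤ)+1) * v i) (by omega : 0 ≤ n),
      gsum_pull (fun i => ((i:ℤ)+1) * (c i : ℤ)) (by omega : 0 ≤ n)] at hT0'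
    rw [gsum_pull (fun i => ((i:ℤ)+1) * (c i : ℤ)) (by omega : 0 ≤ n)]
    rw [hwdef, mv_eval0]
    simp only [Nat.cast_zero, Nat.cast_one]
    norm_num at hT0' ⊢
    by_cases hE1 : (1:ℤ) ≤ E
    · rw [if_pos hE1]
      rw [if_pos hE1] at hDdef
      linarith [hkey, hecast, hsk1, hT0', hDdef]
    · rw [if_neg hE1]
      rw [if_neg hE1] at hDdef
      have hE00 : E = 0 := by omega
      linarith [hkey, hsk1, hT0', hDdef, hE00]
  · -- T inequalities
    intro j hj1 hjn
    show _ ≤ Tc c n j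
    by_cases hjt : t < j
    · have hcng : ∀ i ∈ Icc j n, ((i:ℤ)+1) * w i = ((i:ℤ)+1) * v i := by
        intro i hi; simp only [Finset.mem_Icc] at hi
        rw [hwdef, mv_eval_hi v s e k D (by omega)]
      rw [Finset.sum_congr rfl hcng]
      exact hT' j hj1 hjn
    by_cases hjs : s < j
    · rw [hsum_hi (fun i => (i:ℤ)+1) j hjs (by omega), hcongrT]
      have h5 : Tc c n t ≤ Tc c n j := Tc_mono c (by omega) htn
      linarith [hmul2, hbT]
    · rw [hsum_lo (fun i => (i:ℤ)+1) j (by omega) (by omega), hsplitT]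
      have h6 := hT' j hj1 hjn
      by_cases hje : ((j:ℤ)) ≤ E
      · rw [if_pos hje]
        have hE1 : (1:ℤ) ≤ E := le_trans (by exact_mod_cast hj1) hje
        linarith [hkC hE1, hkey, hecast, hsk1]
      · rw [if_neg hje]
        linarith [hkey, hsk1, hk1, hCnn (s+1), hE0]
  · -- agreement above t
    intro i hi1 hi2
    rw [hwdef, mv_eval_hi v s e k D hi1]
    exact hvb i hi1 hi2
  · rw [hwdef, mv_evalt v s e k D (by omega)]
end GreedyExchange

section GreedyFinal
open Finset

lemma vt_le_bfun (a c : ℕ → ℕ) (n : ℕ) {t : ℕ} (h2 : 2 ≤ t) (htn : t ≤ n)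
    (v : ℕ → ℤ) (hv : IsSol a c n v)
    (hvb : ∀ i, t < i → i ≤ n → v i = bfun a c n i) : v t ≤ bfun a c n t := by
  obtain ⟨hpos, h00, hS, hS1, hT0, hT⟩ := hv
  have ht0 : (0:ℤ) < (t:ℤ) := by exact_mod_cast (by omega : 0 < t)
  have hcongrS : ∑ i ∈ Icc (t+1) n, (i:ℤ) * v i
      = ∑ i ∈ Icc (t+1) n, (i:ℤ) * bfun a c n i := by
    apply Finset.sum_congr rfl
    intro i hi; simp only [Finset.mem_Icc] at hi
    rw [hvb i (by omega) hi.2]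
  have hcongrT : ∑ i ∈ Icc (t+1) n, ((i:ℤ)+1) * v i
      = ∑ i ∈ Icc (t+1) n, ((i:ℤ)+1) * bfun a c n i := by
    apply Finset.sum_congr rfl
    intro i hi; simp only [Finset.mem_Icc] at hi
    rw [hvb i (by omega) hi.2]
  have h1 := hS t h2 htn
  rw [gsum_pull (fun i => (i:ℤ) * v i) htn, hcongrS] at h1
  have h1' := hT t (by omega) htn
  rw [gsum_pull (fun i => ((i:ℤ)+1) * v i) htn, hcongrT] at h1'
  have hSa : Sa a n t = ∑ i ∈ Icc t n, (i:ℤ) * a i := rfl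
  have hTc : Tc c n t = ∑ i ∈ Icc t n, ((i:ℤ)+1) * c i := rfl
  rw [bfun_eq a c n h2 htn]
  refine le_min (le_fdiv_of_mul_le ht0 ?_) (le_fdiv_of_mul_le (by positivity) ?_)
  · linarith
  · linarith

lemma exchange_iter (a c : ℕ → ℕ) (n : ℕ) {t : ℕ} (h2 : 2 ≤ t) (htn : t ≤ n) :
    ∀ m : ℕ, ∀ v : ℕ → ℤ, IsSol a c n v →
      (∀ i, t < i → i ≤ n → v i = bfun a c n i) →
      bfun a c n t - v t ≤ (m:ℤ) →
      ∃ w, IsSol a c n w ∧ ∀ i, t ≤ i → i ≤ n → w i = bfun a c n i := by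
  intro m
  induction m with
  | zero =>
      intro v hv hvb hm
      refine ⟨v, hv, ?_⟩
      intro i hi1 hi2
      rcases eq_or_lt_of_le hi1 with rfl | hlt
      · have hle := vt_le_bfun a c n h2 htn v hv hvb
        have h0 : bfun a c n t - v t ≤ 0 := by exact_mod_cast hm
        linarith
      · exact hvb i hlt hi2
  | succ m ih =>
      intro v hv hvb hm
      by_cases hcase : bfun a c n t - v t ≤ (m:ℤ)
      · exact ih v hv hvb hcase
      · have hle := vt_le_bfun a c n h2 htn v hv hvb
        push_neg at hcase
        have hlt : v t + 1 ≤ bfun a c n t := by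
          have hm0 : (0:ℤ) ≤ (m:ℤ) := by positivity
          linarith [Int.add_one_le_iff.mpr hcase]
        obtain ⟨w, hw, hwb, hwt⟩ := exchange_step a c n h2 htn v hv hvb hlt
        apply ih w hw hwb
        rw [hwt]
        push_cast at hm ⊢
        linarith

lemma exists_greedy_sol (a c : ℕ → ℕ) (n : ℕ) (hn : 2 ≤ n) (u : ℕ → ℤ)
    (hu : IsSol a c n u) :
    ∃ v, IsSol a c n v ∧ ∀ i, 2 ≤ i → i ≤ n → v i = bfun a c n i := by
  have H : ∀ m, ∀ t, 2 ≤ t → t ≤ n → n - t ≤ m →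
      ∃ v, IsSol a c n v ∧ ∀ i, t ≤ i → i ≤ n → v i = bfun a c n i := by
    intro m
    induction m with
    | zero =>
        intro t h2 htn hm
        apply exchange_iter a c n h2 htn ((bfun a c n t - u t).toNat) u hu
        · intro i hi1 hi2
          exact absurd hi2 (by omega)
        · exact Int.self_le_toNat _
    | succ m ih =>
        intro t h2 htn hm
        by_cases hnt : n - t ≤ m
        · exact ih t h2 htn hnt
        · obtain ⟨v, hv, hvb⟩ := ih (t+1) (by omega) (by omega) (by omega)
          apply exchange_iter a c n h2 htn ((bfun a c n t - v t).toNat) v hv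
          · intro i hi1 hi2
            exact hvb i (by omega) hi2
          · exact Int.self_le_toNat _
  exact H (n-2) 2 le_rfl hn le_rfl

lemma IsSol_congr (a c : ℕ → ℕ) (n : ℕ) (v w : ℕ → ℤ)
    (h : ∀ i, i ≤ n → v i = w i) (hv : IsSol a c n v) : IsSol a c n w := by
  obtain ⟨hpos, h00, hS, hS1, hT0, hT⟩ := hv
  have hc : ∀ j, ∀ g : ℕ → ℤ, ∑ i ∈ Icc j n, g i * w i = ∑ i ∈ Icc j n, g i * v i := by
    intro j g
    apply Finset.sum_congr rfl
    intro i hi; simp only [Finset.mem_Icc] at hi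
    rw [h i hi.2]
  refine ⟨?_, ?_, ?_, ?_, ?_, ?_⟩
  · intro i hi; rw [← h i hi]; exact hpos i hi
  · rw [← h 0 (by omega)]; exact h00
  · intro j hj1 hj2; rw [hc j (fun i => (i:ℤ))]; exact hS j hj1 hj2
  · rw [hc 1 (fun i => (i:ℤ))]; exact hS1
  · rw [hc 0 (fun i => (i:ℤ)+1)]; exact hT0
  · intro j hj1 hj2; rw [hc j (fun i => (i:ℤ)+1)]; exact hT j hj1 hj2

end GreedyFinal

/-- If the linear system has a non-negative integer solution `u`, then the
greedily defined sequence `(b₀, …, bₙ)` is also a solution; in particular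
`2·b₁ ≤ Σ_{i=1}^n (i+1)·cᵢ − Σ_{i=2}^n (i+1)·bᵢ` and `b₀ ≥ a₀`. -/
theorem greedy_is_extremal_solution (a c : ℕ → ℕ) (n : ℕ) (hn : 2 ≤ n)
    (u : ℕ → ℕ) (hu : IsSol a c n (fun i => (u i : ℤ))) :
    IsSol a c n (bfull a c n) ∧
    2 * bone a c n ≤
      (∑ i ∈ Finset.Icc 1 n, ((i : ℤ) + 1) * c i) -
        ∑ i ∈ Finset.Icc 2 n, ((i : ℤ) + 1) * bfun a c n i ∧
    (a 0 : ℤ) ≤ bzero a c n := by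
  obtain ⟨v, hv, hvm⟩ := exists_greedy_sol a c n hn _ hu
  have hsum2S : ∑ i ∈ Finset.Icc 2 n, (i:ℤ) * v i
      = ∑ i ∈ Finset.Icc 2 n, (i:ℤ) * bfun a c n i := by
    apply Finset.sum_congr rfl
    intro i hi; simp only [Finset.mem_Icc] at hi
    rw [hvm i hi.1 hi.2]
  have hsum2T : ∑ i ∈ Finset.Icc 2 n, ((i:ℤ)+1) * v i
      = ∑ i ∈ Finset.Icc 2 n, ((i:ℤ)+1) * bfun a c n i := by
    apply Finset.sum_congr rfl
    intro i hi; simp only [Finset.mem_Icc] at hi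
    rw [hvm i hi.1 hi.2]
  have hv1 : v 1 = bone a c n := by
    have h1 := hv.2.2.2.1
    rw [gsum_pull (fun i => (i:ℤ) * v i) (by omega : 1 ≤ n)] at h1
    norm_num at h1
    rw [hsum2S] at h1
    unfold bone
    linarith
  have hv0 : v 0 = bzero a c n := by
    have h1 := hv.2.2.2.2.1
    rw [gsum_pull (fun i => ((i:ℤ)+1) * v i) (by omega : 0 ≤ n)] at h1
    norm_num at h1
    rw [gsum_pull (fun i => ((i:ℤ)+1) * v i) (by omega : 1 ≤ n)] at h1
    norm_num at h1
    rw [hsum2T] at h1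
    unfold bzero
    rw [← hv1]
    linarith
  have hagree : ∀ i, i ≤ n → v i = bfull a c n i := by
    intro i hi
    by_cases h0 : i = 0
    · subst h0; simpa [bfull] using hv0
    by_cases h1 : i = 1
    · subst h1; simpa [bfull] using hv1
    · have h2i : 2 ≤ i := by omega
      rw [hvm i h2i hi]
      unfold bfull
      rw [if_neg h0, if_neg h1]
  have hbsol : IsSol a c n (bfull a c n) := IsSol_congr a c n v _ hagree hv
  refine ⟨hbsol, ?_, ?_⟩
  · have h1 := hbsol.2.2.2.2.2 1 le_rfl (by omega)
    rw [gsum_pull (fun i => ((i:ℤ)+1) * bfull a c n i) (by omega : 1 ≤ n)] at h1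
    norm_num at h1
    have hb1 : bfull a c n 1 = bone a c n := by simp [bfull]
    have hcong : ∑ i ∈ Finset.Icc 2 n, ((i:ℤ)+1) * bfull a c n i
        = ∑ i ∈ Finset.Icc 2 n, ((i:ℤ)+1) * bfun a c n i := by
      apply Finset.sum_congr rfl
      intro i hi; simp only [Finset.mem_Icc] at hi
      have : bfull a c n i = bfun a c n i := by
        unfold bfull
        rw [if_neg (by omega : ¬ i = 0), if_neg (by omega : ¬ i = 1)]
      rw [this]
    rw [hb1, hcong] at h1
    linarith
  · have h1 := hbsol.2.1
    simpa [bfull] using h1
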